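/- For a C² function w : B₁ → ℝ on the unit disc in ℝ², the determinant of the Hessian satisfies the very weak form identity det D²w = (w_{,1} w_{,2})_{,12} − (1/2)(|w_{,1}|²)_{,22} − (1/2)(|w_{,2}|²)_{,11}, where the right-hand side derivatives are taken in the sense of distributions. -/

import Mathlib

open MeasureTheory Metric Filter Topology

noncomputable section

abbrev E2 : Type := EuclideanSpace ℝ (Fin 2)

def e2 (i : Fin 2) : E2 := EuclideanSpace.single i (1 : ℝ)

/-- Partial derivative `∂f/∂xᵢ` at `x`. -/
noncomputable def pd (f : E2 → ℝ) (i : Fin 2) (x : E2) : ℝ := fderiv ℝ f x (e2 i)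

/-- Entry `(i,j)` of the Hessian matrix of `f` at `x`. -/
noncomputable def hess (f : E2 → ℝ) (x : E2) (i j : Fin 2) : ℝ :=
  fderiv ℝ (fun z => fderiv ℝ f z (e2 i)) x (e2 j)

/-- Determinant of the Hessian of `f` at `x`. -/
noncomputable def hessDet (f : E2 → ℝ) (x : E2) : ℝ :=
  hess f x 0 0 * hess f x 1 1 - hess f x 0 1 * hess f x 1 0

/-! ### Helper lemmas -/

lemma contDiff_pd {f : E2 → ℝ} {m n : WithTop ℕ∞} (hf : ContDiff ℝ n f) (h : m + 1 ≤ n)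
    (i : Fin 2) : ContDiff ℝ m (pd f i) :=
  (hf.fderiv_right h).clm_apply contDiff_const

lemma continuous_pd {f : E2 → ℝ} (hf : ContDiff ℝ 1 f) (i : Fin 2) : Continuous (pd f i) :=
  contDiff_zero.mp (contDiff_pd hf (by norm_num) i)

lemma contDiff_one_pd {f : E2 → ℝ} (hf : ContDiff ℝ 2 f) (i : Fin 2) : ContDiff ℝ 1 (pd f i) :=
  contDiff_pd hf (by norm_num) i

lemma continuous_hess {f : E2 → ℝ} (hf : ContDiff ℝ 2 f) (i j : Fin 2) :
    Continuous (fun x => hess f x i j) :=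
  continuous_pd (contDiff_one_pd hf i) j

lemma pd_mul {f g : E2 → ℝ} (hf : ContDiff ℝ 1 f) (hg : ContDiff ℝ 1 g) (i : Fin 2) (x : E2) :
    pd (fun y => f y * g y) i x = pd f i x * g x + f x * pd g i x := by
  simp only [pd]
  rw [fderiv_fun_mul ((hf.differentiable one_ne_zero) x) ((hg.differentiable one_ne_zero) x)]
  simp only [ContinuousLinearMap.add_apply, ContinuousLinearMap.smul_apply, smul_eq_mul]
  ring

lemma hess_symm {f : E2 → ℝ} (hf : ContDiff ℝ 2 f) (x : E2) (i j : Fin 2) :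
    hess f x i j = hess f x j i := by
  have hd : DifferentiableAt ℝ (fderiv ℝ f) x :=
    ((hf.fderiv_right (m := 1) le_rfl).differentiable one_ne_zero) x
  have key : ∀ i j : Fin 2,
      hess f x i j = fderiv ℝ (fderiv ℝ f) x (e2 j) (e2 i) := by
    intro i j
    have : (fun z => fderiv ℝ f z (e2 i)) = fun z => (fderiv ℝ f z) (e2 i) := rfl
    rw [hess, this, fderiv_clm_apply hd (differentiableAt_const _)]
    simp
  rw [key i j, key j i]
  have hs : IsSymmSndFDerivAt ℝ f x := hf.contDiffAt.isSymmSndFDerivAt (by simp [minSmoothness_of_isRCLikeNormedField])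
  exact hs (e2 j) (e2 i)

lemma pd_eq_zero_of_not_mem {f : E2 → ℝ} {x : E2} (hx : x ∉ tsupport f) (i : Fin 2) :
    pd f i x = 0 := by
  have : fderiv ℝ f x = 0 := by
    have := support_fderiv_subset ℝ (f := f)
    by_contra h
    exact hx (this h)
  simp [pd, this]

lemma hess_eq_zero_of_not_mem {f : E2 → ℝ} {x : E2} (hx : x ∉ tsupport f) (i j : Fin 2) :
    hess f x i j = 0 := by
  have hz : (fun z => fderiv ℝ f z (e2 i)) =ᶠ[nhds x] (fun _ => (0:ℝ)) := by
    filter_upwards [(isOpen_compl_iff.mpr (isClosed_tsupport f)).mem_nhds hx] with y hy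
    have : fderiv ℝ f y = 0 := by
      have := support_fderiv_subset ℝ (f := f)
      by_contra h
      exact hy (this h)
    simp [this]
  rw [hess, hz.fderiv_eq]
  simp

lemma hcs_pd {f : E2 → ℝ} (hf : HasCompactSupport f) (i : Fin 2) :
    HasCompactSupport (pd f i) := by
  apply HasCompactSupport.intro hf
  intro x hx
  exact pd_eq_zero_of_not_mem hx i

lemma integ_mul {a b : E2 → ℝ} (ha : Continuous a) (hb : Continuous b)
    (h : HasCompactSupport a ∨ HasCompactSupport b) :
    Integrable (fun x => a x * b x) volume := by
  apply Continuous.integrable_of_hasCompactSupport (ha.mul hb)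
  rcases h with h | h
  · exact h.mul_right
  · exact h.mul_left

/-- Integration by parts on `E2`. -/
lemma ibp (f g : E2 → ℝ) (v : E2) (hf : ContDiff ℝ 1 f) (hg : ContDiff ℝ 1 g)
    (hs : HasCompactSupport f ∨ HasCompactSupport g) :
    ∫ x, f x * fderiv ℝ g x v = - ∫ x, fderiv ℝ f x v * g x := by
  have hf' : Continuous (fun x => fderiv ℝ f x v) := by
    have := continuous_pd hf  -- not directly; do clm apply
    exact (contDiff_zero.mp ((hf.fderiv_right (by norm_num)).clm_apply contDiff_const))
  have hg' : Continuous (fun x => fderiv ℝ g x v) :=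
    (contDiff_zero.mp ((hg.fderiv_right (by norm_num)).clm_apply contDiff_const))
  have hsf' : HasCompactSupport f → HasCompactSupport (fun x => fderiv ℝ f x v) := by
    intro h
    apply HasCompactSupport.intro h
    intro x hx
    have : fderiv ℝ f x = 0 := by
      have := support_fderiv_subset ℝ (f := f)
      by_contra hc
      exact hx (this hc)
    simp [this]
  have hsg' : HasCompactSupport g → HasCompactSupport (fun x => fderiv ℝ g x v) := by
    intro h
    apply HasCompactSupport.intro h
    intro x hx
    have : fderiv ℝ g x = 0 := by
      have := support_fderiv_subset ℝ (f := g)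
      by_contra hc
      exact hx (this hc)
    simp [this]
  apply integral_mul_fderiv_eq_neg_fderiv_mul_of_integrable
  · exact integ_mul hf' (hg.continuous) (by rcases hs with h|h; exacts [Or.inl (hsf' h), Or.inr h])
  · exact integ_mul (hf.continuous) hg' (by rcases hs with h|h; exacts [Or.inl h, Or.inr (hsg' h)])
  · exact integ_mul (hf.continuous) (hg.continuous) hs
  · exact fun x _ => hf.differentiable one_ne_zero x
  · exact fun x _ => hg.differentiable one_ne_zero x

/-- difference quotients converge to the directional derivative -/
lemma slope_tendsto {f : E2 → ℝ} (hf : Differentiable ℝ f) (x w : E2) :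
    Tendsto (fun n : ℕ => (f (x + (1 / ((n:ℝ)+1)) • w) - f x) / (1 / ((n:ℝ)+1)))
      atTop (𝓝 (fderiv ℝ f x w)) := by
  have hc : HasDerivAt (fun s : ℝ => f (x + s • w)) (fderiv ℝ f x w) 0 := by
    have h1 : HasDerivAt (fun s : ℝ => x + s • w) w 0 := by
      simpa using ((hasDerivAt_id (0:ℝ)).smul_const w).const_add x
    have h2 := (hf (x + (0:ℝ) • w)).hasFDerivAt
    have h3 := h2.comp_hasDerivAt 0 h1
    simpa [Function.comp_def] using h3
  rw [hasDerivAt_iff_tendsto_slope] at hc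
  have htend : Tendsto (fun n : ℕ => 1 / ((n:ℝ)+1)) atTop (𝓝 0) :=
    tendsto_one_div_add_atTop_nhds_zero_nat
  have htt : Tendsto (fun n : ℕ => 1 / ((n:ℝ)+1)) atTop (𝓝[≠] (0:ℝ)) := by
    apply tendsto_nhdsWithin_of_tendsto_nhds_of_eventually_within _ htend
    exact Eventually.of_forall fun n => by
      have : (0:ℝ) < 1 / ((n:ℝ)+1) := by positivity
      exact Set.mem_compl_singleton_iff.mpr this.ne'
  have := hc.comp htt
  refine this.congr fun n => ?_
  simp [slope, smul_eq_mul]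
  ring

/-- Weak Schwarz lemma: symmetry of mixed integrals for C¹ functions. -/
lemma wsl (h g : E2 → ℝ) (u v : E2) (hh : ContDiff ℝ 1 h) (hc : HasCompactSupport h)
    (hg : ContDiff ℝ 1 g) :
    ∫ x, fderiv ℝ h x u * fderiv ℝ g x v = ∫ x, fderiv ℝ h x v * fderiv ℝ g x u := by
  classical
  set t : ℕ → ℝ := fun n => 1 / ((n:ℝ)+1) with ht_def
  have ht0 : ∀ n, 0 < t n := fun n => by positivity
  have ht1 : ∀ n, t n ≤ 1 := fun n => by
    rw [ht_def]
    rw [div_le_one (by positivity)]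
    simp
  -- basic continuity facts
  have cDh : Continuous (fderiv ℝ h) := contDiff_zero.mp (hh.fderiv_right (by norm_num))
  have cDg : Continuous (fderiv ℝ g) := contDiff_zero.mp (hg.fderiv_right (by norm_num))
  have cDhu : Continuous (fun x => fderiv ℝ h x u) :=
    (ContinuousLinearMap.apply ℝ ℝ u).continuous.comp cDh
  have cDgu : Continuous (fun x => fderiv ℝ g x u) :=
    (ContinuousLinearMap.apply ℝ ℝ u).continuous.comp cDg
  have cDgv : Continuous (fun x => fderiv ℝ g x v) :=
    (ContinuousLinearMap.apply ℝ ℝ v).continuous.comp cDg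
  set K : Set E2 := tsupport h with hK_def
  have hK : IsCompact K := hc
  obtain ⟨R₀, hR₀⟩ : ∃ r, K ⊆ closedBall 0 r := hK.isBounded.subset_closedBall 0
  set R : ℝ := max R₀ 0 + ‖u‖ + ‖v‖ + 1 with hR_def
  have hR₀R : max R₀ 0 + ‖v‖ ≤ R := by
    have : (0:ℝ) ≤ ‖u‖ := norm_nonneg _
    rw [hR_def]; linarith
  have hKR : ∀ x ∈ K, ‖x‖ ≤ max R₀ 0 := fun x hx => by
    have := hR₀ hx
    simp only [mem_closedBall, dist_zero_right] at this
    exact this.trans (le_max_left _ _)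
  set K1 : Set E2 := closedBall 0 R with hK1_def
  have hK1c : IsCompact K1 := isCompact_closedBall 0 R
  -- bound for fderiv g on K1
  obtain ⟨Mg₀, hMg₀⟩ : ∃ C, ∀ x ∈ K1, ‖fderiv ℝ g x‖ ≤ C :=
    hK1c.exists_bound_of_continuousOn cDg.continuousOn
  set Mg : ℝ := max Mg₀ 0 with hMg_def
  have hMg : ∀ x ∈ K1, ‖fderiv ℝ g x‖ ≤ Mg := fun x hx => (hMg₀ x hx).trans (le_max_left _ _)
  have hMg0 : 0 ≤ Mg := le_max_right _ _
  -- global bound for fderiv h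
  obtain ⟨Ch₀, hCh₀⟩ : ∃ C, ∀ x ∈ K, ‖fderiv ℝ h x‖ ≤ C :=
    hK.exists_bound_of_continuousOn cDh.continuousOn
  set Ch : ℝ := max Ch₀ 0 with hCh_def
  have hCh : ∀ x, ‖fderiv ℝ h x‖ ≤ Ch := by
    intro x
    by_cases hx : x ∈ K
    · exact (hCh₀ x hx).trans (le_max_left _ _)
    · have : fderiv ℝ h x = 0 := by
        by_contra hcon
        exact hx (support_fderiv_subset ℝ hcon)
      rw [this]; simp [hCh_def]
  have hCh0 : 0 ≤ Ch := le_max_right _ _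
  have hDh0 : ∀ x, x ∉ K → fderiv ℝ h x = 0 := by
    intro x hx
    by_contra hcon
    exact hx (support_fderiv_subset ℝ hcon)
  have hDhu : HasCompactSupport (fun x => fderiv ℝ h x u) := by
    apply HasCompactSupport.intro hK
    intro x hx; rw [hDh0 x hx]; simp
  have hh0 : ∀ x, x ∉ K → h x = 0 := fun x hx => image_eq_zero_of_notMem_tsupport hx
  -- membership facts
  have memK1 : ∀ x ∈ K, x ∈ K1 := fun x hx => by
    simp only [hK1_def, mem_closedBall, dist_zero_right]
    have := hKR x hx
    have h1 : (0:ℝ) ≤ ‖u‖ := norm_nonneg _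
    have h2 : (0:ℝ) ≤ ‖v‖ := norm_nonneg _
    rw [hR_def]; linarith
  have memK1' : ∀ x ∈ K, ∀ n, x + t n • v ∈ K1 := by
    intro x hx n
    simp only [hK1_def, mem_closedBall, dist_zero_right]
    have h1 : ‖x + t n • v‖ ≤ ‖x‖ + ‖t n • v‖ := norm_add_le _ _
    have h2 : ‖t n • v‖ = |t n| * ‖v‖ := by rw [norm_smul]; simp
    have h3 : |t n| ≤ 1 := by rw [abs_of_pos (ht0 n)]; exact ht1 n
    have h4 := hKR x hx
    have h5 : (0:ℝ) ≤ ‖u‖ := norm_nonneg _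
    have h6 : |t n| * ‖v‖ ≤ ‖v‖ := by
      have := mul_le_of_le_one_left (norm_nonneg v) h3
      linarith
    rw [hR_def]; linarith
  -- First dominated convergence
  have key1 : Tendsto (fun n => ∫ x, fderiv ℝ h x u * ((g (x + t n • v) - g x) / t n))
      atTop (𝓝 (∫ x, fderiv ℝ h x u * fderiv ℝ g x v)) := by
    apply tendsto_integral_of_dominated_convergence
      (bound := K.indicator fun _ => (Ch * ‖u‖) * (Mg * ‖v‖))
    · intro n
      apply Continuous.aestronglyMeasurable
      exact cDhu.mul (((hg.continuous.comp (continuous_id.add continuous_const)).sub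
        hg.continuous).div_const _)
    · exact (integrableOn_const hK.measure_lt_top.ne).integrable_indicator
        (isClosed_tsupport h).measurableSet
    · intro n
      apply Eventually.of_forall
      intro x
      by_cases hx : x ∈ K
      · rw [Set.indicator_of_mem hx]
        have b1 : |fderiv ℝ h x u| ≤ Ch * ‖u‖ := by
          calc |fderiv ℝ h x u| ≤ ‖fderiv ℝ h x‖ * ‖u‖ := (fderiv ℝ h x).le_opNorm u
          _ ≤ Ch * ‖u‖ := by
            apply mul_le_mul_of_nonneg_right (hCh x) (norm_nonneg _)
        have b2 : |g (x + t n • v) - g x| ≤ Mg * (t n * ‖v‖) := by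
          have := Convex.norm_image_sub_le_of_norm_fderiv_le
            (fun y (_ : y ∈ K1) => (hg.differentiable one_ne_zero) y)
            hMg (convex_closedBall (0:E2) R) (memK1 x hx) (memK1' x hx n)
          simpa [norm_smul, abs_of_pos (ht0 n)] using this
        have b3 : |(g (x + t n • v) - g x) / t n| ≤ Mg * ‖v‖ := by
          rw [abs_div, abs_of_pos (ht0 n), div_le_iff₀ (ht0 n)]
          calc |g (x + t n • v) - g x| ≤ Mg * (t n * ‖v‖) := b2
          _ = Mg * ‖v‖ * t n := by ring
        calc ‖fderiv ℝ h x u * ((g (x + t n • v) - g x) / t n)‖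
            = |fderiv ℝ h x u| * |(g (x + t n • v) - g x) / t n| := by
              rw [Real.norm_eq_abs, abs_mul]
          _ ≤ (Ch * ‖u‖) * (Mg * ‖v‖) := by
              apply mul_le_mul b1 b3 (abs_nonneg _) (by positivity)
      · rw [Set.indicator_of_notMem hx, hDh0 x hx]
        simp
    · apply Eventually.of_forall
      intro x
      exact (slope_tendsto (hg.differentiable one_ne_zero) x v).const_mul _
  -- the translated difference quotient of h
  set H : ℕ → E2 → ℝ := fun n x => (h (x - t n • v) - h x) / t n with hH_def
  have Hdiff : ∀ n, ContDiff ℝ 1 (H n) := by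
    intro n
    exact ((hh.comp (contDiff_id.sub contDiff_const)).sub hh).div_const _
  have Hsupp : ∀ n x, x ∉ K1 → H n x = 0 := by
    intro n x hx
    have hx' : R < ‖x‖ := by
      by_contra hcon
      push_neg at hcon
      exact hx (by simp [hK1_def, mem_closedBall, dist_zero_right]; exact hcon)
    have h1 : h x = 0 := by
      apply hh0
      intro hmem
      have hb := hKR x hmem
      have hR' : max R₀ 0 ≤ R := by
        have h5 := norm_nonneg u
        have h6 := norm_nonneg v
        rw [hR_def]; linarith
      linarith
    have h2 : h (x - t n • v) = 0 := by
      apply hh0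
      intro hmem
      have hb := hKR _ hmem
      have h3 : ‖x‖ ≤ ‖x - t n • v‖ + ‖t n • v‖ := by
        have := norm_add_le (x - t n • v) (t n • v)
        simpa using this
      have h4 : ‖t n • v‖ ≤ ‖v‖ := by
        rw [norm_smul, Real.norm_eq_abs, abs_of_pos (ht0 n)]
        exact mul_le_of_le_one_left (norm_nonneg v) (ht1 n)
      have : ‖x‖ ≤ max R₀ 0 + ‖v‖ := by linarith
      have := le_trans this hR₀R
      linarith
    show (h (x - t n • v) - h x) / t n = 0
    rw [h1, h2]
    simp
  have HC : ∀ n, HasCompactSupport (H n) := fun n => HasCompactSupport.intro hK1c (Hsupp n)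
  have HD : ∀ n x, fderiv ℝ (H n) x u
      = (fderiv ℝ h (x - t n • v) u - fderiv ℝ h x u) / t n := by
    intro n x
    have h1 : HasFDerivAt (fun y => h (y - t n • v)) (fderiv ℝ h (x - t n • v)) x := by
      have ha := ((hh.differentiable one_ne_zero) (x - t n • v)).hasFDerivAt
      have hb : HasFDerivAt (fun y : E2 => y - t n • v) (ContinuousLinearMap.id ℝ E2) x :=
        (hasFDerivAt_id x).sub_const _
      simpa [Function.comp_def] using ha.comp x hb
    have h2 : HasFDerivAt (H n)
        ((t n)⁻¹ • (fderiv ℝ h (x - t n • v) - fderiv ℝ h x)) x := by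
      have h3 := (h1.sub ((hh.differentiable one_ne_zero) x).hasFDerivAt).const_smul (t n)⁻¹
      have heq : (H n) = fun y => (t n)⁻¹ • (h (y - t n • v) - h y) := by
        funext y
        show (h (y - t n • v) - h y) / t n = _
        rw [smul_eq_mul, div_eq_inv_mul]
      rw [heq]
      exact h3
    rw [h2.fderiv]
    simp [div_eq_inv_mul]
  -- translation identity
  have trans : ∀ n, ∫ x, fderiv ℝ h x u * g (x + t n • v)
      = ∫ x, fderiv ℝ h (x - t n • v) u * g x := by
    intro n
    have := integral_add_right_eq_self (μ := volume)
      (fun y => fderiv ℝ h (y - t n • v) u * g y) (t n • v)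
    rw [← this]
    congr 1
    funext x
    simp [add_sub_cancel_right]
  -- integrability facts
  have int2 : Integrable (fun x => fderiv ℝ h x u * g x) volume :=
    integ_mul cDhu hg.continuous (Or.inl hDhu)
  have int1 : ∀ n, Integrable (fun x => fderiv ℝ h x u * g (x + t n • v)) volume := by
    intro n
    exact integ_mul cDhu (hg.continuous.comp (continuous_id.add continuous_const))
      (Or.inl hDhu)
  have int3 : ∀ n, Integrable (fun x => fderiv ℝ h (x - t n • v) u * g x) volume := by
    intro n
    apply integ_mul (cDhu.comp (continuous_id.sub continuous_const)) hg.continuous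
    left
    apply HasCompactSupport.intro hK1c
    intro x hx
    have : x - t n • v ∉ K := by
      intro hmem
      have hb := hKR _ hmem
      have hx' : R < ‖x‖ := by
        by_contra hcon
        push_neg at hcon
        exact hx (by simp [hK1_def, mem_closedBall, dist_zero_right]; exact hcon)
      have h3 : ‖x‖ ≤ ‖x - t n • v‖ + ‖t n • v‖ := by
        have := norm_add_le (x - t n • v) (t n • v)
        simpa using this
      have h4 : ‖t n • v‖ ≤ ‖v‖ := by
        rw [norm_smul, Real.norm_eq_abs, abs_of_pos (ht0 n)]
        exact mul_le_of_le_one_left (norm_nonneg v) (ht1 n)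
      have : ‖x‖ ≤ max R₀ 0 + ‖v‖ := by linarith
      have := le_trans this hR₀R
      linarith
    show (fderiv ℝ h (id x - t n • v)) u = 0
    simp only [id_eq]
    rw [hDh0 _ this]
    simp
  -- rewrite the sequence
  have seq_eq : ∀ n, ∫ x, fderiv ℝ h x u * ((g (x + t n • v) - g x) / t n)
      = - ∫ x, H n x * fderiv ℝ g x u := by
    intro n
    have e1 : ∫ x, fderiv ℝ h x u * ((g (x + t n • v) - g x) / t n)
        = (t n)⁻¹ * ((∫ x, fderiv ℝ h x u * g (x + t n • v)) - ∫ x, fderiv ℝ h x u * g x) := by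
      rw [← integral_sub (int1 n) int2, ← integral_const_mul]
      congr 1
      funext x
      rw [div_eq_inv_mul]
      ring
    have e2 : (t n)⁻¹ * ((∫ x, fderiv ℝ h (x - t n • v) u * g x) - ∫ x, fderiv ℝ h x u * g x)
        = ∫ x, fderiv ℝ (H n) x u * g x := by
      rw [← integral_sub (int3 n) int2, ← integral_const_mul]
      congr 1
      funext x
      rw [HD n x]
      rw [div_eq_inv_mul]
      ring
    have e3 := ibp (H n) g u (Hdiff n) hg (Or.inl (HC n))
    rw [e1, trans n, e2]
    linarith [e3]
  -- Second dominated convergence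
  have key2 : Tendsto (fun n => ∫ x, H n x * fderiv ℝ g x u)
      atTop (𝓝 (∫ x, (-(fderiv ℝ h x v)) * fderiv ℝ g x u)) := by
    apply tendsto_integral_of_dominated_convergence
      (bound := K1.indicator fun _ => (Ch * ‖v‖) * (Mg * ‖u‖))
    · intro n
      apply Continuous.aestronglyMeasurable
      exact (((hh.continuous.comp (continuous_id.sub continuous_const)).sub
        hh.continuous).div_const _).mul cDgu
    · exact (integrableOn_const hK1c.measure_lt_top.ne).integrable_indicator
        measurableSet_closedBall
    · intro n
      apply Eventually.of_forall
      intro x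
      by_cases hx : x ∈ K1
      · rw [Set.indicator_of_mem hx]
        have b1 : |H n x| ≤ Ch * ‖v‖ := by
          have hmvt := Convex.norm_image_sub_le_of_norm_fderiv_le
            (fun y (_ : y ∈ (Set.univ : Set E2)) => (hh.differentiable one_ne_zero) y)
            (fun y _ => hCh y) convex_univ (Set.mem_univ x) (Set.mem_univ (x - t n • v))
          have hnorm : ‖(x - t n • v) - x‖ = t n * ‖v‖ := by
            have : (x - t n • v) - x = -(t n • v) := by abel
            rw [this, norm_neg, norm_smul, Real.norm_eq_abs, abs_of_pos (ht0 n)]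
          show |(h (x - t n • v) - h x) / t n| ≤ Ch * ‖v‖
          rw [abs_div, abs_of_pos (ht0 n), div_le_iff₀ (ht0 n)]
          calc |h (x - t n • v) - h x| = ‖h (x - t n • v) - h x‖ := (Real.norm_eq_abs _).symm
            _ ≤ Ch * ‖(x - t n • v) - x‖ := hmvt
            _ = Ch * (t n * ‖v‖) := by rw [hnorm]
            _ = Ch * ‖v‖ * t n := by ring
        have b2 : |fderiv ℝ g x u| ≤ Mg * ‖u‖ := by
          calc |fderiv ℝ g x u| ≤ ‖fderiv ℝ g x‖ * ‖u‖ := (fderiv ℝ g x).le_opNorm u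
          _ ≤ Mg * ‖u‖ := mul_le_mul_of_nonneg_right (hMg x hx) (norm_nonneg _)
        calc ‖H n x * fderiv ℝ g x u‖ = |H n x| * |fderiv ℝ g x u| := by
              rw [Real.norm_eq_abs, abs_mul]
          _ ≤ (Ch * ‖v‖) * (Mg * ‖u‖) := mul_le_mul b1 b2 (abs_nonneg _) (by positivity)
      · rw [Set.indicator_of_notMem hx, Hsupp n x hx]
        simp
    · apply Eventually.of_forall
      intro x
      have hsl := (slope_tendsto (hh.differentiable one_ne_zero) x (-v)).mul_const (fderiv ℝ g x u)
      have hval : fderiv ℝ h x (-v) * fderiv ℝ g x u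
          = (-(fderiv ℝ h x v)) * fderiv ℝ g x u := by
        simp
      rw [← hval]
      apply hsl.congr
      intro n
      have harg : x + (1/((n:ℝ)+1)) • (-v) = x - t n • v := by
        simp [ht_def, smul_neg, sub_eq_add_neg, one_div]
      rw [harg]
  have key1' : Tendsto (fun n => ∫ x, fderiv ℝ h x u * ((g (x + t n • v) - g x) / t n))
      atTop (𝓝 (∫ x, fderiv ℝ h x v * fderiv ℝ g x u)) := by
    have hneg := key2.neg
    have e : - ∫ x, (-(fderiv ℝ h x v)) * fderiv ℝ g x u
        = ∫ x, fderiv ℝ h x v * fderiv ℝ g x u := by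
      rw [← integral_neg]
      congr 1
      funext x
      ring
    rw [e] at hneg
    exact hneg.congr (fun n => (seq_eq n).symm)
  exact tendsto_nhds_unique key1 key1'
theorem main_global (W φ : E2 → ℝ) (hW : ContDiff ℝ 2 W) (hφ : ContDiff ℝ 3 φ)
    (hφs : HasCompactSupport φ) :
    ∫ x, hessDet W x * φ x
      = ∫ x, ((pd W 0 x * pd W 1 x) * hess φ x 0 1
          - (1 / 2) * (pd W 0 x) ^ 2 * hess φ x 1 1
          - (1 / 2) * (pd W 1 x) ^ 2 * hess φ x 0 0) := by
  have hφ1 : ContDiff ℝ 1 φ := hφ.of_le (by norm_num)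
  have cDW0 : ContDiff ℝ 1 (pd W 0) := contDiff_one_pd hW 0
  have cDW1 : ContDiff ℝ 1 (pd W 1) := contDiff_one_pd hW 1
  have cDφ0 : ContDiff ℝ 1 (pd φ 0) := contDiff_pd hφ (by norm_num) 0
  have cDφ1 : ContDiff ℝ 1 (pd φ 1) := contDiff_pd hφ (by norm_num) 1
  have cp0 : Continuous (pd W 0) := cDW0.continuous
  have cp1 : Continuous (pd W 1) := cDW1.continuous
  have cq0 : Continuous (pd φ 0) := cDφ0.continuous
  have cq1 : Continuous (pd φ 1) := cDφ1.continuous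
  have cφ : Continuous φ := hφ.continuous
  have c00 : Continuous (fun x => hess W x 0 0) := continuous_hess hW 0 0
  have c01 : Continuous (fun x => hess W x 0 1) := continuous_hess hW 0 1
  have c10 : Continuous (fun x => hess W x 1 0) := continuous_hess hW 1 0
  have c11 : Continuous (fun x => hess W x 1 1) := continuous_hess hW 1 1
  have cQ01 : Continuous (fun x => hess φ x 0 1) := continuous_hess (hφ.of_le (by norm_num)) 0 1
  have cQ11 : Continuous (fun x => hess φ x 1 1) := continuous_hess (hφ.of_le (by norm_num)) 1 1
  have cQ00 : Continuous (fun x => hess φ x 0 0) := continuous_hess (hφ.of_le (by norm_num)) 0 0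
  have hsym : ∀ x, hess W x 1 0 = hess W x 0 1 := fun x => hess_symm hW x 1 0
  -- integrability helper
  have hint : ∀ F : E2 → ℝ, Continuous F → (∀ x, x ∉ tsupport φ → F x = 0) →
      Integrable F volume := fun F hc h0 =>
    hc.integrable_of_hasCompactSupport (HasCompactSupport.intro hφs h0)
  -- rfl lemmas for rewriting
  have l2 : ∀ (j : Fin 2) x, fderiv ℝ (pd W 1) x (e2 j) = hess W x 1 j := fun j x => rfl
  have l3 : ∀ (i j : Fin 2) x, fderiv ℝ (pd φ i) x (e2 j) = hess φ x i j := fun i j x => rfl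
  have l4 : ∀ (i : Fin 2) x, fderiv ℝ (fun y => pd W 0 y * φ y) x (e2 i)
      = hess W x 0 i * φ x + pd W 0 x * pd φ i x := fun i x => pd_mul cDW0 hφ1 i x
  have l5 : ∀ (i : Fin 2) x, fderiv ℝ (fun y => pd W 0 y * pd W 1 y) x (e2 i)
      = hess W x 0 i * pd W 1 x + pd W 0 x * hess W x 1 i := fun i x => pd_mul cDW0 cDW1 i x
  have l6 : ∀ (i : Fin 2) x, fderiv ℝ (fun y => pd W 0 y * pd W 0 y) x (e2 i)
      = hess W x 0 i * pd W 0 x + pd W 0 x * hess W x 0 i := fun i x => pd_mul cDW0 cDW0 i x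
  have l7 : ∀ (i : Fin 2) x, fderiv ℝ (fun y => pd W 1 y * pd W 1 y) x (e2 i)
      = hess W x 1 i * pd W 1 x + pd W 1 x * hess W x 1 i := fun i x => pd_mul cDW1 cDW1 i x
  -- weak Schwarz application
  have E1 : ∫ x, (hess W x 0 0 * φ x + pd W 0 x * pd φ 0 x) * hess W x 1 1
      = ∫ x, (hess W x 0 1 * φ x + pd W 0 x * pd φ 1 x) * hess W x 1 0 := by
    have := wsl (fun x => pd W 0 x * φ x) (pd W 1) (e2 0) (e2 1)
      (cDW0.mul hφ1) (hφs.mul_left) cDW1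
    simp only [l4, l2] at this
    exact this
  -- integration by parts applications
  have T1 : ∫ x, (pd W 0 x * pd W 1 x) * hess φ x 0 1
      = - ∫ x, (hess W x 0 1 * pd W 1 x + pd W 0 x * hess W x 1 1) * pd φ 0 x := by
    have := ibp (fun x => pd W 0 x * pd W 1 x) (pd φ 0) (e2 1)
      (cDW0.mul cDW1) cDφ0 (Or.inr (hcs_pd hφs 0))
    simp only [l3, l5] at this
    exact this
  have T2 : ∫ x, (pd W 0 x * pd W 0 x) * hess φ x 1 1
      = - ∫ x, (hess W x 0 1 * pd W 0 x + pd W 0 x * hess W x 0 1) * pd φ 1 x := by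
    have := ibp (fun x => pd W 0 x * pd W 0 x) (pd φ 1) (e2 1)
      (cDW0.mul cDW0) cDφ1 (Or.inr (hcs_pd hφs 1))
    simp only [l3, l6] at this
    exact this
  have T3 : ∫ x, (pd W 1 x * pd W 1 x) * hess φ x 0 0
      = - ∫ x, (hess W x 1 0 * pd W 1 x + pd W 1 x * hess W x 1 0) * pd φ 0 x := by
    have := ibp (fun x => pd W 1 x * pd W 1 x) (pd φ 0) (e2 0)
      (cDW1.mul cDW1) cDφ0 (Or.inr (hcs_pd hφs 0))
    simp only [l3, l7] at this
    exact this
  -- integrability facts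
  have intA : Integrable (fun x => (hess W x 0 0 * φ x + pd W 0 x * pd φ 0 x) * hess W x 1 1)
      volume := by
    apply hint _ (((c00.mul cφ).add (cp0.mul cq0)).mul c11)
    intro x hx
    simp only [Pi.mul_apply, Pi.add_apply, Pi.pow_apply]
    rw [image_eq_zero_of_notMem_tsupport hx, pd_eq_zero_of_not_mem hx 0]
    ring
  have intA' : Integrable (fun x => (hess W x 0 1 * φ x + pd W 0 x * pd φ 1 x) * hess W x 1 0)
      volume := by
    apply hint _ (((c01.mul cφ).add (cp0.mul cq1)).mul c10)
    intro x hx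
    simp only [Pi.mul_apply, Pi.add_apply, Pi.pow_apply]
    rw [image_eq_zero_of_notMem_tsupport hx, pd_eq_zero_of_not_mem hx 1]
    ring
  have intB : Integrable (fun x => pd W 0 x * pd φ 0 x * hess W x 1 1) volume := by
    apply hint _ ((cp0.mul cq0).mul c11)
    intro x hx
    simp only [Pi.mul_apply, Pi.add_apply, Pi.pow_apply]
    rw [pd_eq_zero_of_not_mem hx 0]
    ring
  have intC : Integrable (fun x => hess W x 0 1 * hess W x 1 0 * φ x) volume := by
    apply hint _ ((c01.mul c10).mul cφ)
    intro x hx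
    simp only [Pi.mul_apply, Pi.add_apply, Pi.pow_apply]
    rw [image_eq_zero_of_notMem_tsupport hx]
    ring
  have intR1 : Integrable (fun x => (pd W 0 x * pd W 1 x) * hess φ x 0 1) volume := by
    apply hint _ ((cp0.mul cp1).mul cQ01)
    intro x hx
    simp only [Pi.mul_apply, Pi.add_apply, Pi.pow_apply]
    rw [hess_eq_zero_of_not_mem hx 0 1]
    ring
  have intR2 : Integrable (fun x => (1 / 2 : ℝ) * (pd W 0 x) ^ 2 * hess φ x 1 1) volume := by
    apply hint _ (((continuous_const.mul (cp0.pow 2))).mul cQ11)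
    intro x hx
    simp only [Pi.mul_apply, Pi.add_apply, Pi.pow_apply]
    rw [hess_eq_zero_of_not_mem hx 1 1]
    ring
  have intR3 : Integrable (fun x => (1 / 2 : ℝ) * (pd W 1 x) ^ 2 * hess φ x 0 0) volume := by
    apply hint _ (((continuous_const.mul (cp1.pow 2))).mul cQ00)
    intro x hx
    simp only [Pi.mul_apply, Pi.add_apply, Pi.pow_apply]
    rw [hess_eq_zero_of_not_mem hx 0 0]
    ring
  have intS1 : Integrable (fun x => (hess W x 0 1 * pd W 1 x + pd W 0 x * hess W x 1 1) * pd φ 0 x)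
      volume := by
    apply hint _ (((c01.mul cp1).add (cp0.mul c11)).mul cq0)
    intro x hx
    simp only [Pi.mul_apply, Pi.add_apply, Pi.pow_apply]
    rw [pd_eq_zero_of_not_mem hx 0]
    ring
  have intS2 : Integrable (fun x => (hess W x 0 1 * pd W 0 x + pd W 0 x * hess W x 0 1) * pd φ 1 x)
      volume := by
    apply hint _ (((c01.mul cp0).add (cp0.mul c01)).mul cq1)
    intro x hx
    simp only [Pi.mul_apply, Pi.add_apply, Pi.pow_apply]
    rw [pd_eq_zero_of_not_mem hx 1]
    ring
  have intS3 : Integrable (fun x => (hess W x 1 0 * pd W 1 x + pd W 1 x * hess W x 1 0) * pd φ 0 x)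
      volume := by
    apply hint _ (((c10.mul cp1).add (cp1.mul c10)).mul cq0)
    intro x hx
    simp only [Pi.mul_apply, Pi.add_apply, Pi.pow_apply]
    rw [pd_eq_zero_of_not_mem hx 0]
    ring
  -- the common value
  have intBC : Integrable (fun x => pd W 0 x * pd φ 0 x * hess W x 1 1
      + hess W x 0 1 * hess W x 1 0 * φ x) volume := intB.add intC
  have intS2h : Integrable (fun x => (1 / 2 : ℝ)
      * ((hess W x 0 1 * pd W 0 x + pd W 0 x * hess W x 0 1) * pd φ 1 x)) volume :=
    intS2.const_mul _
  have intS3h : Integrable (fun x => (1 / 2 : ℝ)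
      * ((hess W x 1 0 * pd W 1 x + pd W 1 x * hess W x 1 0) * pd φ 0 x)) volume :=
    intS3.const_mul _
  have intS1n : Integrable (fun x =>
      -((hess W x 0 1 * pd W 1 x + pd W 0 x * hess W x 1 1) * pd φ 0 x)) volume := intS1.neg
  have intNS12 : Integrable (fun x =>
      -((hess W x 0 1 * pd W 1 x + pd W 0 x * hess W x 1 1) * pd φ 0 x)
      + (1 / 2 : ℝ) * ((hess W x 0 1 * pd W 0 x + pd W 0 x * hess W x 0 1) * pd φ 1 x)) volume :=
    intS1n.add intS2h
  have intR12 : Integrable (fun x => (pd W 0 x * pd W 1 x) * hess φ x 0 1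
      - (1 / 2 : ℝ) * (pd W 0 x) ^ 2 * hess φ x 1 1) volume := intR1.sub intR2
  -- LHS = ∫ F
  have hLHS : ∫ x, hessDet W x * φ x = ∫ x, (pd W 0 x * pd φ 1 x * hess W x 0 1 - pd W 0 x * pd φ 0 x * hess W x 1 1) := by
    have s1 : (fun x => hessDet W x * φ x)
        = fun x => (hess W x 0 0 * φ x + pd W 0 x * pd φ 0 x) * hess W x 1 1
            - (pd W 0 x * pd φ 0 x * hess W x 1 1 + hess W x 0 1 * hess W x 1 0 * φ x) := by
      funext x
      simp only [hessDet]
      ring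
    have s2 : ∫ x, hessDet W x * φ x
        = (∫ x, (hess W x 0 0 * φ x + pd W 0 x * pd φ 0 x) * hess W x 1 1)
          - ∫ x, (pd W 0 x * pd φ 0 x * hess W x 1 1 + hess W x 0 1 * hess W x 1 0 * φ x) := by
      rw [s1, integral_sub intA intBC]
    have s3 : ∫ x, (hess W x 0 1 * φ x + pd W 0 x * pd φ 1 x) * hess W x 1 0
          - (pd W 0 x * pd φ 0 x * hess W x 1 1 + hess W x 0 1 * hess W x 1 0 * φ x)
        = (∫ x, (hess W x 0 1 * φ x + pd W 0 x * pd φ 1 x) * hess W x 1 0)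
          - ∫ x, (pd W 0 x * pd φ 0 x * hess W x 1 1 + hess W x 0 1 * hess W x 1 0 * φ x) :=
      integral_sub intA' intBC
    have s4 : ∫ x, (hess W x 0 1 * φ x + pd W 0 x * pd φ 1 x) * hess W x 1 0
          - (pd W 0 x * pd φ 0 x * hess W x 1 1 + hess W x 0 1 * hess W x 1 0 * φ x)
        = ∫ x, (pd W 0 x * pd φ 1 x * hess W x 0 1 - pd W 0 x * pd φ 0 x * hess W x 1 1) := by
      congr 1
      funext x
      rw [hsym x]
      ring
    rw [s2, E1, ← s3, s4]
  -- RHS = ∫ F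
  have hRHS : ∫ x, ((pd W 0 x * pd W 1 x) * hess φ x 0 1
          - (1 / 2) * (pd W 0 x) ^ 2 * hess φ x 1 1
          - (1 / 2) * (pd W 1 x) ^ 2 * hess φ x 0 0) = ∫ x, (pd W 0 x * pd φ 1 x * hess W x 0 1 - pd W 0 x * pd φ 0 x * hess W x 1 1) := by
    have r1 : ∫ x, ((pd W 0 x * pd W 1 x) * hess φ x 0 1
          - (1 / 2) * (pd W 0 x) ^ 2 * hess φ x 1 1
          - (1 / 2) * (pd W 1 x) ^ 2 * hess φ x 0 0)
        = (∫ x, (pd W 0 x * pd W 1 x) * hess φ x 0 1)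
          - (∫ x, (1 / 2 : ℝ) * (pd W 0 x) ^ 2 * hess φ x 1 1)
          - ∫ x, (1 / 2 : ℝ) * (pd W 1 x) ^ 2 * hess φ x 0 0 := by
      rw [integral_sub intR12 intR3, integral_sub intR1 intR2]
    have r2 : ∫ x, (1 / 2 : ℝ) * (pd W 0 x) ^ 2 * hess φ x 1 1
        = (1 / 2 : ℝ) * ∫ x, (pd W 0 x * pd W 0 x) * hess φ x 1 1 := by
      rw [← integral_const_mul]
      congr 1
      funext x
      ring
    have r3 : ∫ x, (1 / 2 : ℝ) * (pd W 1 x) ^ 2 * hess φ x 0 0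
        = (1 / 2 : ℝ) * ∫ x, (pd W 1 x * pd W 1 x) * hess φ x 0 0 := by
      rw [← integral_const_mul]
      congr 1
      funext x
      ring
    have r4 : ∫ x, (pd W 0 x * pd φ 1 x * hess W x 0 1 - pd W 0 x * pd φ 0 x * hess W x 1 1)
        = ∫ x, (-((hess W x 0 1 * pd W 1 x + pd W 0 x * hess W x 1 1) * pd φ 0 x)
            + (1 / 2 : ℝ) * ((hess W x 0 1 * pd W 0 x + pd W 0 x * hess W x 0 1) * pd φ 1 x)
            + (1 / 2 : ℝ) * ((hess W x 1 0 * pd W 1 x + pd W 1 x * hess W x 1 0) * pd φ 0 x)) := by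
      congr 1
      funext x
      rw [hsym x]
      ring
    have r5 : ∫ x, (-((hess W x 0 1 * pd W 1 x + pd W 0 x * hess W x 1 1) * pd φ 0 x)
            + (1 / 2 : ℝ) * ((hess W x 0 1 * pd W 0 x + pd W 0 x * hess W x 0 1) * pd φ 1 x)
            + (1 / 2 : ℝ) * ((hess W x 1 0 * pd W 1 x + pd W 1 x * hess W x 1 0) * pd φ 0 x))
        = - (∫ x, (hess W x 0 1 * pd W 1 x + pd W 0 x * hess W x 1 1) * pd φ 0 x)
          + (1 / 2 : ℝ) * (∫ x, (hess W x 0 1 * pd W 0 x + pd W 0 x * hess W x 0 1) * pd φ 1 x)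
          + (1 / 2 : ℝ) * ∫ x, (hess W x 1 0 * pd W 1 x + pd W 1 x * hess W x 1 0) * pd φ 0 x := by
      rw [integral_add intNS12 intS3h, integral_add intS1n intS2h, integral_neg,
        integral_const_mul, integral_const_mul]
    rw [r1, T1, r2, T2, r3, T3, r4, r5]
    ring
  rw [hLHS, hRHS]
/-- Very weak form of the Hessian determinant: for `w ∈ C²(B₁)` and every
smooth `φ` compactly supported in `B₁`,
`∫ det D²w · φ = ∫ (w,₁w,₂) φ,₁₂ − ½ (w,₁)² φ,₂₂ − ½ (w,₂)² φ,₁₁`. -/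
theorem stmt4 (w : E2 → ℝ) (hw : ContDiffOn ℝ 2 w (ball (0 : E2) 1))
    (φ : E2 → ℝ) (hφ : ContDiff ℝ (⊤ : ℕ∞) φ) (hsupp : tsupport φ ⊆ ball (0 : E2) 1) :
    ∫ x in ball (0 : E2) 1, hessDet w x * φ x
      = ∫ x in ball (0 : E2) 1,
          ((pd w 0 x * pd w 1 x) * hess φ x 0 1
            - (1 / 2) * (pd w 0 x) ^ 2 * hess φ x 1 1
            - (1 / 2) * (pd w 1 x) ^ 2 * hess φ x 0 0) := by
  classical
  have hφ3 : ContDiff ℝ 3 φ := hφ.of_le (WithTop.coe_le_coe.mpr le_top)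
  have hφs : HasCompactSupport φ := HasCompactSupport.of_support_subset_isCompact
    (isCompact_closedBall (0:E2) 1) ((subset_tsupport φ).trans
      (hsupp.trans ball_subset_closedBall))
  -- find a smaller ball containing the support
  obtain ⟨r, hr0, hr1, hrsub⟩ : ∃ r, 0 < r ∧ r < 1 ∧ tsupport φ ⊆ ball (0:E2) r := by
    rcases (tsupport φ).eq_empty_or_nonempty with he | hne
    · exact ⟨1/2, by norm_num, by norm_num, by simp [he]⟩
    · obtain ⟨z, hz, hmax⟩ := hφs.exists_isMaxOn hne continuous_norm.continuousOn
      have hz1 : ‖z‖ < 1 := by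
        have := hsupp hz
        simpa [mem_ball, dist_zero_right] using this
      refine ⟨(‖z‖ + 1) / 2, by positivity, by linarith, fun y hy => ?_⟩
      have hy' : ‖y‖ ≤ ‖z‖ := hmax hy
      simp only [mem_ball, dist_zero_right]
      linarith
  -- cutoff function
  let χ : ContDiffBump (0 : E2) := ⟨r, (r + 1) / 2, hr0, by linarith⟩
  have hχout : χ.rOut < 1 := by
    show (r + 1) / 2 < 1
    linarith
  have hχsupp : tsupport (χ : E2 → ℝ) ⊆ ball (0:E2) 1 := by
    rw [χ.tsupport_eq]
    exact closedBall_subset_ball hχout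
  set W : E2 → ℝ := fun x => χ x * w x with hW_def
  have hWC : ContDiff ℝ 2 W := by
    rw [contDiff_iff_contDiffAt]
    intro x
    by_cases hx : x ∈ ball (0:E2) 1
    · exact (χ.contDiff.contDiffAt).mul (hw.contDiffAt (isOpen_ball.mem_nhds hx))
    · have hx' : x ∈ (tsupport (χ : E2 → ℝ))ᶜ := fun hmem => hx (hχsupp hmem)
      have hev : W =ᶠ[nhds x] (fun _ => (0:ℝ)) := by
        filter_upwards [(isOpen_compl_iff.mpr (isClosed_tsupport _)).mem_nhds hx'] with y hy
        simp [hW_def, image_eq_zero_of_notMem_tsupport hy]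
      exact (contDiffAt_const (c := (0:ℝ))).congr_of_eventuallyEq hev
  -- W agrees with w near the support of φ
  have heqU : ∀ x ∈ ball (0:E2) r, W =ᶠ[nhds x] w := by
    intro x hx
    filter_upwards [isOpen_ball.mem_nhds hx] with y hy
    have : χ y = 1 := χ.one_of_mem_closedBall (ball_subset_closedBall hy)
    simp [hW_def, this]
  have hpd : ∀ (i : Fin 2), ∀ x ∈ ball (0:E2) r, pd W i x = pd w i x := by
    intro i x hx
    simp only [pd]
    rw [(heqU x hx).fderiv_eq]
  have hhess : ∀ (i j : Fin 2), ∀ x ∈ ball (0:E2) r, hess W x i j = hess w x i j := by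
    intro i j x hx
    have hev : (fun z => fderiv ℝ W z (e2 i)) =ᶠ[nhds x] (fun z => fderiv ℝ w z (e2 i)) := by
      filter_upwards [isOpen_ball.mem_nhds hx] with y hy
      rw [(heqU y hy).fderiv_eq]
    simp only [hess]
    rw [hev.fderiv_eq]
  have hdet : ∀ x ∈ ball (0:E2) r, hessDet W x = hessDet w x := by
    intro x hx
    simp only [hessDet, hhess 0 0 x hx, hhess 1 1 x hx, hhess 0 1 x hx, hhess 1 0 x hx]
  -- pass from set integrals to global integrals
  have hLHS : ∫ x in ball (0:E2) 1, hessDet w x * φ x = ∫ x, hessDet W x * φ x := by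
    rw [show ∫ x in ball (0:E2) 1, hessDet w x * φ x
        = ∫ x in ball (0:E2) 1, hessDet W x * φ x from
      setIntegral_congr_fun measurableSet_ball (fun x hx => by
        by_cases hxr : x ∈ ball (0:E2) r
        · rw [hdet x hxr]
        · have : φ x = 0 := image_eq_zero_of_notMem_tsupport (fun hmem => hxr (hrsub hmem))
          rw [this, mul_zero, mul_zero])]
    exact setIntegral_eq_integral_of_forall_compl_eq_zero (fun x hx => by
      have : φ x = 0 := image_eq_zero_of_notMem_tsupport
        (fun hmem => hx (hsupp hmem))
      rw [this, mul_zero])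
  have hRHS : ∫ x in ball (0 : E2) 1,
          ((pd w 0 x * pd w 1 x) * hess φ x 0 1
            - (1 / 2) * (pd w 0 x) ^ 2 * hess φ x 1 1
            - (1 / 2) * (pd w 1 x) ^ 2 * hess φ x 0 0)
      = ∫ x, ((pd W 0 x * pd W 1 x) * hess φ x 0 1
            - (1 / 2) * (pd W 0 x) ^ 2 * hess φ x 1 1
            - (1 / 2) * (pd W 1 x) ^ 2 * hess φ x 0 0) := by
    rw [show ∫ x in ball (0:E2) 1,
          ((pd w 0 x * pd w 1 x) * hess φ x 0 1
            - (1 / 2) * (pd w 0 x) ^ 2 * hess φ x 1 1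
            - (1 / 2) * (pd w 1 x) ^ 2 * hess φ x 0 0)
        = ∫ x in ball (0:E2) 1,
          ((pd W 0 x * pd W 1 x) * hess φ x 0 1
            - (1 / 2) * (pd W 0 x) ^ 2 * hess φ x 1 1
            - (1 / 2) * (pd W 1 x) ^ 2 * hess φ x 0 0) from
      setIntegral_congr_fun measurableSet_ball (fun x hx => by
        by_cases hxr : x ∈ ball (0:E2) r
        · rw [hpd 0 x hxr, hpd 1 x hxr]
        · have hmem : x ∉ tsupport φ := fun hmem => hxr (hrsub hmem)
          rw [hess_eq_zero_of_not_mem hmem 0 1, hess_eq_zero_of_not_mem hmem 1 1,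
            hess_eq_zero_of_not_mem hmem 0 0]
          ring)]
    exact setIntegral_eq_integral_of_forall_compl_eq_zero (fun x hx => by
      have hmem : x ∉ tsupport φ := fun hmem => hx (hsupp hmem)
      rw [hess_eq_zero_of_not_mem hmem 0 1, hess_eq_zero_of_not_mem hmem 1 1,
        hess_eq_zero_of_not_mem hmem 0 0]
      ring)
  rw [hLHS, hRHS]
  exact main_global W φ hWC hφ3 hφs
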